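/- For all natural numbers p and ℓ, the p-th central moment of ssac(f), as f ranges uniformly over the 2^ℓ binary sequences of length ℓ, equals Σ_{ℭ ∈ Isom(p)} |ℭ| · Sols(ℭ, ℓ), where the sum is over all isomorphism classes ℭ of contributory partitions, |ℭ| is the number of partitions in the class ℭ, and Sols(ℭ, ℓ) is the common value of |As(𝒫,=,ℓ)| for 𝒫 ∈ ℭ. -/

import Mathlib

open scoped BigOperators

/-- The binary sequence of length `ℓ` determined by the sign pattern `σ`:
it takes values `±1` on `{0, …, ℓ-1}` and `0` elsewhere. -/
noncomputable def seq (ℓ : ℕ) (σ : Fin ℓ → Bool) : ℤ → ℝ := fun j =>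
  if h : 0 ≤ j ∧ j < (ℓ : ℤ) then (if σ ⟨j.toNat, by omega⟩ then 1 else -1) else 0

/-- Aperiodic autocorrelation of `f` at shift `s`. -/
noncomputable def autocorr (f : ℤ → ℝ) (s : ℤ) : ℝ := ∑ᶠ j : ℤ, f (j + s) * f j

/-- Sum of squares of all autocorrelation values. -/
noncomputable def ssac (f : ℤ → ℝ) : ℝ := ∑ᶠ s : ℤ, autocorr f s ^ 2

/-- Expected value of `v(f)` as `f` ranges uniformly over the `2^ℓ` binary
sequences of length `ℓ`. -/
noncomputable def expect (ℓ : ℕ) (v : (ℤ → ℝ) → ℝ) : ℝ :=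
  (∑ σ : Fin ℓ → Bool, v (seq ℓ σ)) / 2 ^ ℓ

/-- The `p`-th central moment of `v(f)` over binary sequences of length `ℓ`. -/
noncomputable def cmom (p ℓ : ℕ) (v : (ℤ → ℝ) → ℝ) : ℝ :=
  expect ℓ fun f => (v f - expect ℓ v) ^ p

/-- The autocorrelation demerit factor of a binary sequence of length `ℓ`. -/
noncomputable def ADF (ℓ : ℕ) (f : ℤ → ℝ) : ℝ := -1 + ssac f / (ℓ : ℝ) ^ 2
/-- The index set `[p] × [2] × [2]` of the terms of a system of `p` equations,
each with two sides of two terms each. -/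
abbrev Idx (p : ℕ) : Type := Fin p × Fin 2 × Fin 2

/-- `β` and `γ` lie in a common class of `𝔓`. -/
def MemSameClass {α : Type*} (𝔓 : Set (Set α)) (β γ : α) : Prop :=
  ∃ P ∈ 𝔓, β ∈ P ∧ γ ∈ P

/-- The assignment `τ` induces the partition `𝔓`: two indices get equal values
iff they lie in a common class of `𝔓`. -/
def Induces {α : Type*} (τ : α → ℕ) (𝔓 : Set (Set α)) : Prop :=
  ∀ β γ, τ β = τ γ ↔ MemSameClass 𝔓 β γ

/-- `As([p],=,ℓ)`: assignments with all values in `[ℓ]` satisfying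
`τ(e,0,0)+τ(e,0,1) = τ(e,1,0)+τ(e,1,1)` for every equation `e`. -/
def AsEq (p ℓ : ℕ) : Set (Idx p → ℕ) :=
  {τ | (∀ γ, τ γ < ℓ) ∧
    ∀ e : Fin p, τ (e, 0, 0) + τ (e, 0, 1) = τ (e, 1, 0) + τ (e, 1, 1)}

/-- `As(𝔓,=,ℓ)`: the assignments in `As([p],=,ℓ)` that induce the partition `𝔓`. -/
def AsPart (p ℓ : ℕ) (𝔓 : Set (Set (Idx p))) : Set (Idx p → ℕ) :=
  {τ ∈ AsEq p ℓ | Induces τ 𝔓}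

/-- A partition `𝔓` is satisfiable if `As(𝔓,=,ℓ)` is nonempty for some `ℓ`. -/
def Satisfiable (p : ℕ) (𝔓 : Set (Set (Idx p))) : Prop :=
  ∃ ℓ : ℕ, (AsPart p ℓ 𝔓).Nonempty

/-- The restriction of `𝔓` to `F ⊆ [p]`: the nonempty intersections of classes
of `𝔓` with `F × [2] × [2]`. -/
def restrictPart (p : ℕ) (F : Set (Fin p)) (𝔓 : Set (Set (Idx p))) : Set (Set (Idx p)) :=
  {Q | Q.Nonempty ∧ ∃ P ∈ 𝔓, Q = P ∩ {x : Idx p | x.1 ∈ F}}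

/-- A collection of classes is even if every class has even cardinality. -/
def IsEvenPart (p : ℕ) (𝔓 : Set (Set (Idx p))) : Prop :=
  ∀ P ∈ 𝔓, Even P.ncard

/-- Globally even, locally odd: `𝔓` is even but no restriction `𝔓_{{e}}` is even. -/
def GELO (p : ℕ) (𝔓 : Set (Set (Idx p))) : Prop :=
  IsEvenPart p 𝔓 ∧ ∀ e : Fin p, ¬ IsEvenPart p (restrictPart p {e} 𝔓)

/-- `ConPart(p)`: the contributory partitions of `[p] × [2] × [2]`, i.e. the
partitions that are globally even, locally odd and satisfiable. -/
def ConPart (p : ℕ) : Set (Set (Set (Idx p))) :=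
  {𝔓 | Setoid.IsPartition 𝔓 ∧ GELO p 𝔓 ∧ Satisfiable p 𝔓}

/-- The group `W^(p)` of permutations of `[p] × [2] × [2]` that permute the
equations, the sides of each equation, and the places on each side. -/
def Wgroup (p : ℕ) : Set (Equiv.Perm (Idx p)) :=
  {π | ∃ (ε : Equiv.Perm (Fin p)) (σ : Fin p → Equiv.Perm (Fin 2))
      (Φ : Fin p → Fin 2 → Equiv.Perm (Fin 2)),
    ∀ x : Idx p, π x = (ε x.1, σ (ε x.1) x.2.1, Φ (ε x.1) (σ (ε x.1) x.2.1) x.2.2)}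

/-- The action of a permutation `π` on a partition: `π(𝔓) = {π(P) : P ∈ 𝔓}`. -/
def mapPart (p : ℕ) (π : Equiv.Perm (Idx p)) (𝔓 : Set (Set (Idx p))) : Set (Set (Idx p)) :=
  (fun P => (π : Idx p → Idx p) '' P) '' 𝔓

/-- `𝔓` and `𝔔` are isomorphic if `𝔔 = π(𝔓)` for some `π ∈ W^(p)`. -/
def Isomorphic (p : ℕ) (𝔓 𝔔 : Set (Set (Idx p))) : Prop :=
  ∃ π ∈ Wgroup p, 𝔔 = mapPart p π 𝔓

/-- `Isom(p)`: the set of isomorphism classes of contributory partitions. -/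
def IsomCls (p : ℕ) : Set (Set (Set (Set (Idx p)))) :=
  {C | ∃ 𝔓 ∈ ConPart p, C = {𝔔 | Isomorphic p 𝔓 𝔔}}

section Aux
open Finset

variable {ℓ : ℕ}

/-- sign of the sequence -/
noncomputable def sg {ℓ : ℕ} (σ : Fin ℓ → Bool) (i : Fin ℓ) : ℝ := if σ i then 1 else -1

lemma sg_eq (σ : Fin ℓ → Bool) (i : Fin ℓ) : sg σ i = 1 ∨ sg σ i = -1 := by
  unfold sg; split <;> simp

lemma seq_apply (σ : Fin ℓ → Bool) (j : ℤ) (h : 0 ≤ j ∧ j < (ℓ : ℤ)) :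
    seq ℓ σ j = sg σ ⟨j.toNat, by omega⟩ := by
  rw [seq, dif_pos h]; rfl

lemma seq_coe (σ : Fin ℓ → Bool) (i : Fin ℓ) : seq ℓ σ ((i : ℕ) : ℤ) = sg σ i := by
  rw [seq_apply σ _ (by exact ⟨by positivity, by exact_mod_cast i.2⟩)]
  congr 1

lemma seq_eq_zero (σ : Fin ℓ → Bool) (j : ℤ) (h : ¬(0 ≤ j ∧ j < (ℓ : ℤ))) :
    seq ℓ σ j = 0 := dif_neg h

lemma seq_support (σ : Fin ℓ → Bool) {j : ℤ} (h : seq ℓ σ j ≠ 0) : 0 ≤ j ∧ j < (ℓ : ℤ) := by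
  by_contra hc; exact h (seq_eq_zero σ j hc)

lemma autocorr_seq (σ : Fin ℓ → Bool) (s : ℤ) :
    autocorr (seq ℓ σ) s = ∑ b : Fin ℓ, seq ℓ σ ((b : ℕ) + s) * sg σ b := by
  rw [autocorr]
  have hsub : Function.support (fun j => seq ℓ σ (j + s) * seq ℓ σ j) ⊆
      ↑((Finset.range ℓ).map ⟨(Nat.cast : ℕ → ℤ), Nat.cast_injective⟩) := by
    intro j hj
    simp only [Function.mem_support] at hj
    have h2 : seq ℓ σ j ≠ 0 := fun h => hj (by rw [h, mul_zero])
    obtain ⟨h3, h4⟩ := seq_support σ h2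
    simp only [Finset.coe_map, Finset.coe_range, Set.mem_image, Function.Embedding.coeFn_mk,
      Set.mem_Iio]
    exact ⟨j.toNat, by omega, by omega⟩
  rw [finsum_eq_finset_sum_of_support_subset _ hsub, Finset.sum_map]
  simp only [Function.Embedding.coeFn_mk]
  rw [← Fin.sum_univ_eq_sum_range (fun n => seq ℓ σ ((n : ℕ) + s) * seq ℓ σ ((n : ℕ) : ℤ))]
  exact Finset.sum_congr rfl fun b _ => by rw [seq_coe]

lemma autocorr_seq_eq_zero (σ : Fin ℓ → Bool) (s : ℤ) (h : ¬ (-(ℓ:ℤ) < s ∧ s < ℓ)) :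
    autocorr (seq ℓ σ) s = 0 := by
  rw [autocorr_seq]
  refine Finset.sum_eq_zero fun b _ => ?_
  rw [seq_eq_zero σ _ (by have := b.2; omega), zero_mul]

/-- The finset of solutions of a single equation. -/
def QS (ℓ : ℕ) : Finset ((Fin 2 × Fin 2) → Fin ℓ) :=
  Finset.univ.filter fun q => ((q (0,0) : ℕ) + (q (0,1) : ℕ) = (q (1,0) : ℕ) + (q (1,1) : ℕ))

lemma sg_ne_zero (σ : Fin ℓ → Bool) (i : Fin ℓ) : sg σ i ≠ 0 := by
  rcases sg_eq σ i with h | h <;> rw [h] <;> norm_num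

lemma prod_sg (σ : Fin ℓ → Bool) (q : Fin 2 × Fin 2 → Fin ℓ) :
    ∏ i : Fin 2 × Fin 2, sg σ (q i)
      = sg σ (q (0,0)) * sg σ (q (0,1)) * (sg σ (q (1,0)) * sg σ (q (1,1))) := by
  rw [Fintype.prod_prod_type]
  rw [Fin.prod_univ_two (fun s => ∏ v : Fin 2, sg σ (q (s, v)))]
  rw [Fin.prod_univ_two, Fin.prod_univ_two]

def mkFin {ℓ : ℕ} (j : ℤ) (dflt : Fin ℓ) : Fin ℓ :=
  if h : 0 ≤ j ∧ j < (ℓ:ℤ) then ⟨j.toNat, by omega⟩ else dflt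

lemma mkFin_coe {ℓ : ℕ} (j : ℤ) (d : Fin ℓ) (h : 0 ≤ j ∧ j < (ℓ:ℤ)) :
    ((mkFin j d : Fin ℓ) : ℕ) = j.toNat := by rw [mkFin, dif_pos h]

lemma seq_apply' (σ : Fin ℓ → Bool) (j : ℤ) (d : Fin ℓ) (h : 0 ≤ j ∧ j < (ℓ:ℤ)) :
    seq ℓ σ j = sg σ (mkFin j d) := by
  rw [seq_apply σ j h]
  congr 1
  exact Fin.ext (by rw [mkFin_coe _ _ h])

def qmap {ℓ : ℕ} (x : ℤ × Fin ℓ × Fin ℓ) : Fin 2 × Fin 2 → Fin ℓ := fun iv =>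
  match iv with
  | (0,0) => mkFin ((x.2.1 : ℕ) + x.1) x.2.1
  | (0,1) => x.2.2
  | (1,0) => x.2.1
  | (1,1) => mkFin ((x.2.2 : ℕ) + x.1) x.2.2

lemma qmap_00 {ℓ : ℕ} (x : ℤ × Fin ℓ × Fin ℓ) : qmap x (0,0) = mkFin ((x.2.1 : ℕ) + x.1) x.2.1 := rfl
lemma qmap_01 {ℓ : ℕ} (x : ℤ × Fin ℓ × Fin ℓ) : qmap x (0,1) = x.2.2 := rfl
lemma qmap_10 {ℓ : ℕ} (x : ℤ × Fin ℓ × Fin ℓ) : qmap x (1,0) = x.2.1 := rfl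
lemma qmap_11 {ℓ : ℕ} (x : ℤ × Fin ℓ × Fin ℓ) : qmap x (1,1) = mkFin ((x.2.2 : ℕ) + x.1) x.2.2 := rfl

lemma ssac_seq (σ : Fin ℓ → Bool) :
    ssac (seq ℓ σ) = ∑ q ∈ QS ℓ, ∏ i : Fin 2 × Fin 2, sg σ (q i) := by
  classical
  have h1 : ssac (seq ℓ σ) = ∑ s ∈ Finset.Ioo (-(ℓ:ℤ)) (ℓ:ℤ), (autocorr (seq ℓ σ) s)^2 := by
    apply finsum_eq_finset_sum_of_support_subset
    intro s hs
    simp only [Function.mem_support] at hs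
    simp only [Finset.coe_Ioo, Set.mem_Ioo]
    by_contra hc
    push_neg at hc
    exact hs (by rw [autocorr_seq_eq_zero σ s (by omega)]; norm_num)
  rw [h1]
  simp_rw [autocorr_seq σ, pow_two, Finset.sum_mul_sum]
  simp_rw [← Finset.sum_product']
  refine Finset.sum_bij_ne_zero (i := fun x _ _ => qmap x) ?_ ?_ ?_ ?_
  · -- membership in QS
    intro x hmem hne
    simp only [QS, Finset.mem_filter, Finset.mem_univ, true_and]
    have h2 : seq ℓ σ ((x.2.1 : ℕ) + x.1) ≠ 0 := fun h => hne (by rw [h]; ring)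
    have h3 : seq ℓ σ ((x.2.2 : ℕ) + x.1) ≠ 0 := fun h => hne (by rw [h]; ring)
    have h4 := seq_support σ h2
    have h5 := seq_support σ h3
    rw [qmap_00, qmap_01, qmap_10, qmap_11, mkFin_coe _ _ h4, mkFin_coe _ _ h5]
    omega
  · -- injectivity
    intro x hx hnex y hy hney heq
    have h2 : seq ℓ σ ((x.2.1 : ℕ) + x.1) ≠ 0 := fun h => hnex (by rw [h]; ring)
    have h4 := seq_support σ h2
    have h2' : seq ℓ σ ((y.2.1 : ℕ) + y.1) ≠ 0 := fun h => hney (by rw [h]; ring)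
    have h4' := seq_support σ h2'
    have e1 := congrArg (fun q => ((q ((0:Fin 2),(0:Fin 2)) : Fin ℓ) : ℕ)) heq
    have e2 := congrFun heq ((0:Fin 2),(1:Fin 2))
    have e3 := congrFun heq ((1:Fin 2),(0:Fin 2))
    simp only [qmap_00, qmap_01, qmap_10] at e1 e2 e3
    rw [mkFin_coe _ _ h4, mkFin_coe _ _ h4'] at e1
    obtain ⟨xs, xb, xd⟩ := x
    obtain ⟨ys, yb, yd⟩ := y
    simp only at e1 e2 e3 h4 h4' ⊢
    have hb : xb = yb := e3
    subst hb
    have hd : xd = yd := e2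
    subst hd
    have hs : xs = ys := by omega
    subst hs
    rfl
  · -- surjectivity
    intro q hq hgq
    simp only [QS, Finset.mem_filter, Finset.mem_univ, true_and] at hq
    refine ⟨(((q (0,0) : ℕ) : ℤ) - ((q (1,0) : ℕ) : ℤ), q (1,0), q (0,1)), ?_, ?_, ?_⟩
    · simp only [Finset.mem_product, Finset.mem_Ioo, Finset.mem_univ, and_true]
      have := (q (0,0)).2
      have := (q (1,0)).2
      omega
    · -- f ≠ 0
      simp only
      have hb : ((q (1,0) : ℕ) : ℤ) + (((q (0,0) : ℕ) : ℤ) - ((q (1,0) : ℕ) : ℤ)) = ((q (0,0) : ℕ) : ℤ) := by ring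
      have hd : ((q (0,1) : ℕ) : ℤ) + (((q (0,0) : ℕ) : ℤ) - ((q (1,0) : ℕ) : ℤ)) = ((q (1,1) : ℕ) : ℤ) := by
        push_cast; omega
      rw [hb, hd, seq_coe, seq_coe]
      intro hc
      rcases mul_eq_zero.mp hc with h | h <;>
        rcases mul_eq_zero.mp h with h' | h' <;>
        exact absurd h' (sg_ne_zero σ _)
    · -- qmap x = q
      funext iv
      have hr1 : (0:ℤ) ≤ ((q (1,0) : ℕ) : ℤ) + (((q (0,0) : ℕ) : ℤ) - ((q (1,0) : ℕ) : ℤ)) ∧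
          ((q (1,0) : ℕ) : ℤ) + (((q (0,0) : ℕ) : ℤ) - ((q (1,0) : ℕ) : ℤ)) < (ℓ:ℤ) := by
        have := (q (0,0)).2; omega
      have hr2 : (0:ℤ) ≤ ((q (0,1) : ℕ) : ℤ) + (((q (0,0) : ℕ) : ℤ) - ((q (1,0) : ℕ) : ℤ)) ∧
          ((q (0,1) : ℕ) : ℤ) + (((q (0,0) : ℕ) : ℤ) - ((q (1,0) : ℕ) : ℤ)) < (ℓ:ℤ) := by
        have := (q (1,1)).2; omega
      beta_reduce
      rcases (by decide : ∀ jv : Fin 2 × Fin 2, jv = (0,0) ∨ jv = (0,1) ∨ jv = (1,0) ∨ jv = (1,1)) iv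
        with h | h | h | h <;> subst h
      · rw [qmap_00]
        refine Fin.ext ?_
        rw [mkFin_coe _ _ hr1]
        omega
      · rw [qmap_01]
      · rw [qmap_10]
      · rw [qmap_11]
        refine Fin.ext ?_
        rw [mkFin_coe _ _ hr2]
        omega
  · -- values agree
    intro x hx hnex
    have h2 : seq ℓ σ ((x.2.1 : ℕ) + x.1) ≠ 0 := fun h => hnex (by rw [h]; ring)
    have h3 : seq ℓ σ ((x.2.2 : ℕ) + x.1) ≠ 0 := fun h => hnex (by rw [h]; ring)
    have h4 := seq_support σ h2
    have h5 := seq_support σ h3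
    beta_reduce
    rw [prod_sg, qmap_00, qmap_01, qmap_10, qmap_11]
    rw [seq_apply' σ _ x.2.1 h4, seq_apply' σ _ x.2.2 h5]
    ring

end Aux
section Aux2
open Finset

variable {ℓ : ℕ} {β : Type*} [Fintype β] [DecidableEq β]

lemma sg_pow_even (σ : Fin ℓ → Bool) (i : Fin ℓ) {n : ℕ} (hn : Even n) : sg σ i ^ n = 1 := by
  rcases sg_eq σ i with h | h <;> rw [h]
  · exact one_pow n
  · exact hn.neg_one_pow

lemma sum_sg_pow (w : Fin ℓ → ℕ) :
    ∑ σ : Fin ℓ → Bool, ∏ i, (sg σ i)^(w i) = if ∀ i, Even (w i) then (2:ℝ)^ℓ else 0 := by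
  classical
  have h0 : ∀ (σ : Fin ℓ → Bool) (i : Fin ℓ), (sg σ i)^(w i)
      = (fun (i : Fin ℓ) (b : Bool) => (if b then (1:ℝ) else -1)^(w i)) i (σ i) := by
    intro σ i; rfl
  have h1 : ∑ σ : Fin ℓ → Bool, ∏ i, (sg σ i)^(w i)
      = ∏ i : Fin ℓ, ∑ b : Bool, (if b then (1:ℝ) else -1)^(w i) := by
    simp_rw [h0]
    rw [Finset.prod_univ_sum (fun _ => (Finset.univ : Finset Bool))]
    rw [← Fintype.piFinset_univ]
  rw [h1]
  have h2 : ∀ i : Fin ℓ, ∑ b : Bool, (if b then (1:ℝ) else -1)^(w i)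
      = if Even (w i) then 2 else 0 := by
    intro i
    rw [Fintype.sum_bool]
    by_cases h : Even (w i)
    · rw [if_pos h, if_pos (by trivial), if_neg (by simp), one_pow, h.neg_one_pow]; norm_num
    · rw [if_neg h, if_pos (by trivial), if_neg (by simp), one_pow,
        (Nat.not_even_iff_odd.mp h).neg_one_pow]; norm_num
  simp_rw [h2]
  by_cases h : ∀ i, Even (w i)
  · rw [if_pos h]
    rw [Finset.prod_congr rfl (fun i _ => if_pos (h i)), Finset.prod_const]
    simp
  · rw [if_neg h]
    push_neg at h
    obtain ⟨i, hi⟩ := h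
    exact Finset.prod_eq_zero (Finset.mem_univ i) (by rw [if_neg hi])

/-- multiplicity of value `i` in `t` -/
def wt (t : β → Fin ℓ) (i : Fin ℓ) : ℕ := (Finset.univ.filter fun γ => t γ = i).card

lemma prod_sg_eq_pow (σ : Fin ℓ → Bool) (t : β → Fin ℓ) :
    ∏ γ, sg σ (t γ) = ∏ i, (sg σ i)^(wt t i) := by
  rw [← Finset.prod_fiberwise_of_maps_to (fun γ _ => Finset.mem_univ (t γ)) (fun γ => sg σ (t γ))]
  refine Finset.prod_congr rfl fun i _ => ?_
  rw [Finset.prod_congr rfl (fun γ hγ => by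
    rw [(Finset.mem_filter.mp hγ).2]), Finset.prod_const, wt]

lemma sum_prod_sg (t : β → Fin ℓ) :
    ∑ σ : Fin ℓ → Bool, ∏ γ, sg σ (t γ) = if ∀ i, Even (wt t i) then (2:ℝ)^ℓ else 0 := by
  simp_rw [prod_sg_eq_pow]
  exact sum_sg_pow _

lemma prod_sg_eq_one (σ : Fin ℓ → Bool) (t : β → Fin ℓ) (h : ∀ i, Even (wt t i)) :
    ∏ γ, sg σ (t γ) = 1 := by
  rw [prod_sg_eq_pow]
  exact Finset.prod_eq_one fun i _ => sg_pow_even σ i (h i)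

end Aux2
section Aux3
open Finset

variable {p ℓ : ℕ}

def goodF (p ℓ : ℕ) : Finset (Fin p → (Fin 2 × Fin 2 → Fin ℓ)) :=
  (Fintype.piFinset fun _ => QS ℓ).filter fun τ =>
    (∀ i : Fin ℓ, Even (wt (fun γ : Idx p => τ γ.1 γ.2) i))
      ∧ ∀ e, ¬ ∀ i, Even (wt (τ e) i)

lemma expect_ssac :
    expect ℓ ssac = ∑ q ∈ QS ℓ, if ∀ i, Even (wt q i) then (1:ℝ) else 0 := by
  rw [_root_.expect]
  simp_rw [ssac_seq]
  rw [Finset.sum_comm, Finset.sum_div]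
  refine Finset.sum_congr rfl fun q _ => ?_
  rw [sum_prod_sg q]
  by_cases h : ∀ i, Even (wt q i)
  · rw [if_pos h, if_pos h, div_self (by positivity)]
  · rw [if_neg h, if_neg h, zero_div]

lemma innerSumLem (τ : Fin p → (Fin 2 × Fin 2 → Fin ℓ)) :
    ∑ σ : Fin ℓ → Bool, ∏ e : Fin p,
        ((∏ i, sg σ (τ e i)) - (if ∀ i, Even (wt (τ e) i) then (1:ℝ) else 0))
      = if (∀ i : Fin ℓ, Even (wt (fun γ : Idx p => τ γ.1 γ.2) i))
            ∧ (∀ e, ¬ ∀ i, Even (wt (τ e) i)) then (2:ℝ)^ℓ else 0 := by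
  by_cases he : ∀ e, ¬ ∀ i, Even (wt (τ e) i)
  · have hμ : ∀ e : Fin p, (if ∀ i, Even (wt (τ e) i) then (1:ℝ) else 0) = 0 :=
      fun e => if_neg (he e)
    simp_rw [hμ, sub_zero]
    have hpp : ∀ σ : Fin ℓ → Bool, ∏ e : Fin p, ∏ i, sg σ (τ e i)
        = ∏ γ : Idx p, sg σ (τ γ.1 γ.2) :=
      fun σ => (Fintype.prod_prod_type fun γ : Idx p => sg σ (τ γ.1 γ.2)).symm
    simp_rw [hpp]
    rw [sum_prod_sg (fun γ : Idx p => τ γ.1 γ.2)]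
    by_cases hg : ∀ i, Even (wt (fun γ : Idx p => τ γ.1 γ.2) i)
    · rw [if_pos hg, if_pos ⟨hg, he⟩]
    · rw [if_neg hg, if_neg (fun hc => hg hc.1)]
  · push_neg at he
    obtain ⟨e, hee⟩ := he
    rw [if_neg (fun hc => (hc.2 e) hee)]
    refine Finset.sum_eq_zero fun σ _ => ?_
    refine Finset.prod_eq_zero (Finset.mem_univ e) ?_
    rw [prod_sg_eq_one σ (τ e) hee, if_pos hee]
    ring

lemma cmom_eq_card :
    cmom p ℓ ssac = (goodF p ℓ).card := by
  rw [goodF, cmom, _root_.expect]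
  simp_rw [ssac_seq, expect_ssac, ← Finset.sum_sub_distrib, Finset.sum_pow']
  rw [Finset.sum_comm]
  simp_rw [innerSumLem]
  rw [Finset.sum_ite, Finset.sum_const, Finset.sum_const]
  rw [smul_zero, add_zero, nsmul_eq_mul, mul_div_assoc, div_self (by positivity), mul_one]

end Aux3
section Aux4
open Finset

variable {p ℓ : ℕ}

/-- fiber partition of an assignment -/
def FP (τ0 : Idx p → ℕ) : Set (Set (Idx p)) := {S | ∃ γ : Idx p, S = {β | τ0 β = τ0 γ}}

lemma FP_isPartition (τ0 : Idx p → ℕ) : Setoid.IsPartition (FP τ0) := by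
  constructor
  · rintro ⟨γ, hγ⟩
    have : γ ∈ ({β | τ0 β = τ0 γ} : Set (Idx p)) := rfl
    rw [← hγ] at this
    exact this
  · intro a
    refine ⟨{β | τ0 β = τ0 a}, ⟨⟨a, rfl⟩, rfl⟩, ?_⟩
    rintro S ⟨⟨γ, rfl⟩, ha⟩
    have ha' : τ0 a = τ0 γ := ha
    ext β
    simp only [Set.mem_setOf_eq, ha']
lemma induces_FP (τ0 : Idx p → ℕ) : Induces τ0 (FP τ0) := by
  intro β γ
  constructor
  · intro h
    exact ⟨{δ | τ0 δ = τ0 γ}, ⟨γ, rfl⟩, h, rfl⟩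
  · rintro ⟨P, ⟨δ, rfl⟩, hβ, hγ⟩
    exact (hβ : τ0 β = τ0 δ).trans (hγ : τ0 γ = τ0 δ).symm

lemma induces_eq_FP {τ0 : Idx p → ℕ} {𝔓 : Set (Set (Idx p))}
    (hpart : Setoid.IsPartition 𝔓) (hind : Induces τ0 𝔓) : 𝔓 = FP τ0 := by
  have key : ∀ P ∈ 𝔓, ∀ γ ∈ P, P = {β | τ0 β = τ0 γ} := by
    intro P hP γ hγ
    ext β
    simp only [Set.mem_setOf_eq]
    constructor
    · intro hβ
      exact (hind β γ).mpr ⟨P, hP, hβ, hγ⟩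
    · intro hβ
      obtain ⟨Q, hQ, hβQ, hγQ⟩ := (hind β γ).mp hβ
      obtain ⟨B, _, huniq⟩ := hpart.2 γ
      have h1 : Q = B := huniq Q ⟨hQ, hγQ⟩
      have h2 : P = B := huniq P ⟨hP, hγ⟩
      rw [h2, ← h1]
      exact hβQ
  ext S
  constructor
  · intro hS
    have hne : S.Nonempty := Set.nonempty_iff_ne_empty.mpr (fun h => hpart.1 (h ▸ hS))
    obtain ⟨γ, hγ⟩ := hne
    exact ⟨γ, key S hS γ hγ⟩
  · rintro ⟨γ, rfl⟩
    obtain ⟨B, ⟨hB, hγB⟩, _⟩ := hpart.2 γ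
    rw [← key B hB γ hγB]
    exact hB

lemma mem_asPart_FP {τ0 : Idx p → ℕ} (h : τ0 ∈ AsEq p ℓ) : τ0 ∈ AsPart p ℓ (FP τ0) :=
  ⟨h, induces_FP τ0⟩

lemma glob_even_iff (τ0 : Idx p → ℕ) :
    IsEvenPart p (FP τ0) ↔ ∀ n : ℕ, Even {β : Idx p | τ0 β = n}.ncard := by
  constructor
  · intro h n
    rcases Set.eq_empty_or_nonempty {β : Idx p | τ0 β = n} with he | ⟨γ, hγ⟩
    · rw [he]; simp
    · have hγ' : τ0 γ = n := hγ
      have hmem : {β : Idx p | τ0 β = n} ∈ FP τ0 := ⟨γ, by rw [hγ']⟩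
      exact h _ hmem
  · rintro h P ⟨γ, rfl⟩
    exact h (τ0 γ)

lemma restrict_FP_even_iff (τ0 : Idx p → ℕ) (e : Fin p) :
    IsEvenPart p (restrictPart p {e} (FP τ0)) ↔
      ∀ n : ℕ, Even {v : Fin 2 × Fin 2 | τ0 (e, v) = n}.ncard := by
  have hinj : Function.Injective (fun v : Fin 2 × Fin 2 => ((e, v) : Idx p)) :=
    fun a b h => (Prod.ext_iff.mp h).2
  have himg : ∀ n : ℕ, ({β : Idx p | τ0 β = n} ∩ {x : Idx p | x.1 ∈ ({e} : Set (Fin p))})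
      = (fun v : Fin 2 × Fin 2 => ((e, v) : Idx p)) '' {v | τ0 (e, v) = n} := by
    intro n
    ext x
    simp only [Set.mem_inter_iff, Set.mem_setOf_eq, Set.mem_singleton_iff, Set.mem_image]
    constructor
    · rintro ⟨h1, h2⟩
      exact ⟨x.2, by rw [← h2]; exact h1, by rw [← h2]⟩
    · rintro ⟨v, hv, rfl⟩
      exact ⟨hv, rfl⟩
  constructor
  · intro h n
    rcases Set.eq_empty_or_nonempty {v : Fin 2 × Fin 2 | τ0 (e, v) = n} with he' | ⟨v0, hv0⟩
    · rw [he']; simp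
    · have hv0' : τ0 (e, v0) = n := hv0
      have hPmem : {β : Idx p | τ0 β = n} ∈ FP τ0 := ⟨(e, v0), by rw [hv0']⟩
      have hmem : ({β : Idx p | τ0 β = n} ∩ {x : Idx p | x.1 ∈ ({e} : Set (Fin p))})
          ∈ restrictPart p {e} (FP τ0) := by
        refine ⟨⟨(e, v0), ⟨hv0', rfl⟩⟩, {β : Idx p | τ0 β = n}, hPmem, rfl⟩
      have := h _ hmem
      rwa [himg n, Set.ncard_image_of_injective _ hinj] at this
  · rintro h Q ⟨hne, P, ⟨γ, rfl⟩, rfl⟩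
    rw [himg (τ0 γ), Set.ncard_image_of_injective _ hinj]
    exact h (τ0 γ)

/-- good assignments -/
def Cond (p ℓ : ℕ) (τ0 : Idx p → ℕ) : Prop :=
  τ0 ∈ AsEq p ℓ ∧ (∀ n : ℕ, Even {β : Idx p | τ0 β = n}.ncard)
    ∧ ∀ e : Fin p, ¬ ∀ n : ℕ, Even {v : Fin 2 × Fin 2 | τ0 (e, v) = n}.ncard

lemma good_iff (τ0 : Idx p → ℕ) :
    (∃ 𝔓 ∈ ConPart p, τ0 ∈ AsPart p ℓ 𝔓) ↔ Cond p ℓ τ0 := by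
  constructor
  · rintro ⟨𝔓, ⟨hpart, ⟨hge, hlo⟩, _⟩, hAs, hind⟩
    have hFP := induces_eq_FP hpart hind
    subst hFP
    refine ⟨hAs, (glob_even_iff τ0).mp hge, fun e hev => hlo e ?_⟩
    exact (restrict_FP_even_iff τ0 e).mpr hev
  · rintro ⟨hAs, hge, hlo⟩
    refine ⟨FP τ0, ⟨FP_isPartition τ0,
      ⟨(glob_even_iff τ0).mpr hge, fun e hev => hlo e ((restrict_FP_even_iff τ0 e).mp hev)⟩,
      ⟨ℓ, τ0, mem_asPart_FP hAs⟩⟩, mem_asPart_FP hAs⟩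

/-- translation between `Fin ℓ`-valued and `ℕ`-valued assignments -/
def toTau {p ℓ : ℕ} (τ : Fin p → (Fin 2 × Fin 2 → Fin ℓ)) : Idx p → ℕ :=
  fun γ => (τ γ.1 γ.2 : ℕ)

lemma toTau_injective : Function.Injective (toTau (p := p) (ℓ := ℓ)) := by
  intro τ τ' h
  funext e v
  exact Fin.ext (congrFun h (e, v))

lemma wt_eq_ncard {β : Type*} [Fintype β] [DecidableEq β] (t : β → Fin ℓ) (i : Fin ℓ) :
    wt t i = {γ : β | (t γ : ℕ) = (i : ℕ)}.ncard := by
  rw [wt, ← Set.ncard_coe_finset]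
  congr 1
  ext γ
  simp [Fin.ext_iff]

lemma even_wt_iff {β : Type*} [Fintype β] [DecidableEq β] (t : β → Fin ℓ) :
    (∀ i : Fin ℓ, Even (wt t i)) ↔ ∀ n : ℕ, Even {γ : β | (t γ : ℕ) = n}.ncard := by
  constructor
  · intro h n
    by_cases hn : n < ℓ
    · have := h ⟨n, hn⟩
      rwa [wt_eq_ncard] at this
    · have : {γ : β | (t γ : ℕ) = n} = ∅ := by
        ext γ
        simp only [Set.mem_setOf_eq, Set.mem_empty_iff_false, iff_false]
        have := (t γ).2
        omega
      rw [this]; simp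
  · intro h i
    rw [wt_eq_ncard]
    exact h i

lemma mem_goodF_iff (τ : Fin p → (Fin 2 × Fin 2 → Fin ℓ)) :
    τ ∈ goodF p ℓ ↔ Cond p ℓ (toTau τ) := by
  rw [goodF, Finset.mem_filter, Fintype.mem_piFinset]
  have h1 : (∀ e, τ e ∈ QS ℓ) ↔ toTau τ ∈ AsEq p ℓ := by
    simp only [QS, Finset.mem_filter, Finset.mem_univ, true_and, AsEq, Set.mem_setOf_eq]
    constructor
    · intro h
      exact ⟨fun γ => (τ γ.1 γ.2).2, fun e => h e⟩
    · intro h e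
      exact h.2 e
  have h2 : (∀ i : Fin ℓ, Even (wt (fun γ : Idx p => τ γ.1 γ.2) i))
      ↔ ∀ n : ℕ, Even {β : Idx p | toTau τ β = n}.ncard :=
    even_wt_iff (fun γ : Idx p => τ γ.1 γ.2)
  have h3 : ∀ e, (∀ i, Even (wt (τ e) i))
      ↔ ∀ n : ℕ, Even {v : Fin 2 × Fin 2 | toTau τ (e, v) = n}.ncard :=
    fun e => even_wt_iff (τ e)
  rw [Cond]
  constructor
  · rintro ⟨hp, hg, hl⟩
    exact ⟨h1.mp hp, h2.mp hg, fun e hev => hl e ((h3 e).mpr hev)⟩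
  · rintro ⟨hp, hg, hl⟩
    exact ⟨h1.mpr hp, h2.mpr hg, fun e hev => hl e ((h3 e).mp hev)⟩

lemma toTau_surj {τ0 : Idx p → ℕ} (h : τ0 ∈ AsEq p ℓ) :
    ∃ τ : Fin p → (Fin 2 × Fin 2 → Fin ℓ), toTau τ = τ0 := by
  refine ⟨fun e v => ⟨τ0 (e, v), h.1 (e, v)⟩, ?_⟩
  funext γ
  rfl

lemma card_goodF :
    (goodF p ℓ).card = ∑ 𝔓 ∈ (ConPart p).toFinite.toFinset, (AsPart p ℓ 𝔓).ncard := by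
  classical
  rw [Finset.card_eq_sum_card_fiberwise (f := fun τ => FP (toTau τ))
    (t := (ConPart p).toFinite.toFinset) ?_]
  · refine Finset.sum_congr rfl fun 𝔓 h𝔓 => ?_
    have h𝔓' : 𝔓 ∈ ConPart p := by
      rwa [Set.Finite.mem_toFinset] at h𝔓
    have himg : AsPart p ℓ 𝔓
        = toTau '' ((((goodF p ℓ).filter fun τ => FP (toTau τ) = 𝔓) : Finset (Fin p → Fin 2 × Fin 2 → Fin ℓ)) : Set (Fin p → Fin 2 × Fin 2 → Fin ℓ)) := by
      ext τ0
      simp only [Set.mem_image, Finset.coe_filter, Set.mem_setOf_eq]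
      constructor
      · intro hτ0
        have hcond : Cond p ℓ τ0 := good_iff τ0 |>.mp ⟨𝔓, h𝔓', hτ0⟩
        obtain ⟨τ, rfl⟩ := toTau_surj hcond.1
        refine ⟨τ, ⟨(mem_goodF_iff τ).mpr hcond, ?_⟩, rfl⟩
        exact (induces_eq_FP h𝔓'.1 hτ0.2).symm
      · rintro ⟨τ, ⟨hg, hFP⟩, rfl⟩
        have hcond := (mem_goodF_iff τ).mp hg
        rw [← hFP]
        exact mem_asPart_FP hcond.1
    rw [himg, Set.ncard_image_of_injective _ toTau_injective, Set.ncard_coe_finset]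
  · intro τ hτ
    rw [Finset.mem_coe, Set.Finite.mem_toFinset]
    have hcond := (mem_goodF_iff τ).mp hτ
    exact ⟨FP_isPartition _,
      ⟨(glob_even_iff _).mpr hcond.2.1,
        fun e hev => hcond.2.2 e ((restrict_FP_even_iff _ e).mp hev)⟩,
      ⟨ℓ, toTau τ, mem_asPart_FP hcond.1⟩⟩

end Aux4
section Aux5
open Finset

variable {p : ℕ}

lemma perm2 (g : Equiv.Perm (Fin 2)) : (g 0 = 0 ∧ g 1 = 1) ∨ (g 0 = 1 ∧ g 1 = 0) := by
  revert g; decide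

lemma refl_mem_Wgroup : Equiv.refl (Idx p) ∈ Wgroup p :=
  ⟨Equiv.refl _, fun _ => Equiv.refl _, fun _ _ => Equiv.refl _, fun _ => rfl⟩

lemma mapPart_refl (𝔓 : Set (Set (Idx p))) : mapPart p (Equiv.refl (Idx p)) 𝔓 = 𝔓 := by
  simp [mapPart]

lemma mapPart_mapPart (π π' : Equiv.Perm (Idx p)) (𝔓 : Set (Set (Idx p))) :
    mapPart p π' (mapPart p π 𝔓) = mapPart p (π.trans π') 𝔓 := by
  rw [mapPart, mapPart, mapPart, ← Set.image_comp]
  refine Set.image_congr fun P _ => ?_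
  simp only [Function.comp_apply, ← Set.image_comp]
  rfl

lemma mapPart_symm_mapPart (π : Equiv.Perm (Idx p)) (𝔓 : Set (Set (Idx p))) :
    mapPart p π.symm (mapPart p π 𝔓) = 𝔓 := by
  rw [mapPart_mapPart]
  have : π.trans π.symm = Equiv.refl _ := Equiv.self_trans_symm π
  rw [this, mapPart_refl]

lemma symm_mem_Wgroup {π : Equiv.Perm (Idx p)} (h : π ∈ Wgroup p) : π.symm ∈ Wgroup p := by
  obtain ⟨ε, σ, Φ, hπ⟩ := h
  refine ⟨ε.symm, fun h => (σ (ε h)).symm, fun h t => (Φ (ε h) ((σ (ε h)) t)).symm, ?_⟩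
  intro x
  apply π.injective
  rw [Equiv.apply_symm_apply, hπ]
  simp only [Equiv.apply_symm_apply]

lemma trans_mem_Wgroup {π π' : Equiv.Perm (Idx p)} (h : π ∈ Wgroup p) (h' : π' ∈ Wgroup p) :
    π.trans π' ∈ Wgroup p := by
  obtain ⟨ε, σ, Φ, hπ⟩ := h
  obtain ⟨ε', σ', Φ', hπ'⟩ := h'
  refine ⟨ε.trans ε', fun g => (σ (ε'.symm g)).trans (σ' g),
    fun g t => (Φ (ε'.symm g) ((σ' g).symm t)).trans (Φ' g t), ?_⟩
  intro x
  simp only [Equiv.trans_apply, hπ, hπ', Equiv.symm_apply_apply]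

lemma isomorphic_refl (𝔓 : Set (Set (Idx p))) : Isomorphic p 𝔓 𝔓 :=
  ⟨Equiv.refl _, refl_mem_Wgroup, (mapPart_refl 𝔓).symm⟩

lemma isomorphic_symm {𝔓 𝔔 : Set (Set (Idx p))} (h : Isomorphic p 𝔓 𝔔) : Isomorphic p 𝔔 𝔓 := by
  obtain ⟨π, hπ, rfl⟩ := h
  exact ⟨π.symm, symm_mem_Wgroup hπ, (mapPart_symm_mapPart π 𝔓).symm⟩

lemma isomorphic_trans {𝔓 𝔔 ℜ : Set (Set (Idx p))} (h : Isomorphic p 𝔓 𝔔)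
    (h' : Isomorphic p 𝔔 ℜ) : Isomorphic p 𝔓 ℜ := by
  obtain ⟨π, hπ, rfl⟩ := h
  obtain ⟨π', hπ', rfl⟩ := h'
  exact ⟨π.trans π', trans_mem_Wgroup hπ hπ', mapPart_mapPart π π' 𝔓⟩

lemma mapPart_isPartition {π : Equiv.Perm (Idx p)} {𝔓 : Set (Set (Idx p))}
    (h : Setoid.IsPartition 𝔓) : Setoid.IsPartition (mapPart p π 𝔓) := by
  constructor
  · rintro ⟨P, hP, hPe⟩
    exact h.1 ((Set.image_eq_empty.mp hPe) ▸ hP)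
  · intro a
    obtain ⟨B, ⟨hB, haB⟩, huniq⟩ := h.2 (π.symm a)
    refine ⟨π '' B, ⟨⟨B, hB, rfl⟩, ⟨π.symm a, haB, Equiv.apply_symm_apply π a⟩⟩, ?_⟩
    rintro S ⟨⟨Q, hQ, rfl⟩, haQ⟩
    obtain ⟨y, hyQ, hya⟩ := haQ
    have hy : y = π.symm a := by rw [← hya, Equiv.symm_apply_apply]
    subst hy
    rw [huniq Q ⟨hQ, hyQ⟩]

lemma memSameClass_map {π : Equiv.Perm (Idx p)} {𝔓 : Set (Set (Idx p))} (β γ : Idx p) :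
    MemSameClass (mapPart p π 𝔓) β γ ↔ MemSameClass 𝔓 (π.symm β) (π.symm γ) := by
  constructor
  · rintro ⟨S, ⟨P, hP, rfl⟩, hβ, hγ⟩
    obtain ⟨b, hb, hbβ⟩ := hβ
    obtain ⟨c, hc, hcγ⟩ := hγ
    refine ⟨P, hP, ?_, ?_⟩
    · rw [← hbβ, Equiv.symm_apply_apply]; exact hb
    · rw [← hcγ, Equiv.symm_apply_apply]; exact hc
  · rintro ⟨P, hP, hβ, hγ⟩
    exact ⟨π '' P, ⟨P, hP, rfl⟩, ⟨π.symm β, hβ, Equiv.apply_symm_apply π β⟩,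
      ⟨π.symm γ, hγ, Equiv.apply_symm_apply π γ⟩⟩

lemma isEvenPart_map {π : Equiv.Perm (Idx p)} {𝔓 : Set (Set (Idx p))}
    (h : IsEvenPart p 𝔓) : IsEvenPart p (mapPart p π 𝔓) := by
  rintro S ⟨P, hP, rfl⟩
  rw [Set.ncard_image_of_injective P π.injective]
  exact h P hP

lemma inter_image {π : Equiv.Perm (Idx p)} {ε : Equiv.Perm (Fin p)}
    (hfst : ∀ y : Idx p, (π y).1 = ε y.1) (P : Set (Idx p)) (e' : Fin p) :
    (π '' P) ∩ {x : Idx p | x.1 ∈ ({e'} : Set (Fin p))}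
      = π '' (P ∩ {x : Idx p | x.1 ∈ ({ε.symm e'} : Set (Fin p))}) := by
  ext x
  simp only [Set.mem_inter_iff, Set.mem_image, Set.mem_setOf_eq, Set.mem_singleton_iff]
  constructor
  · rintro ⟨⟨y, hyP, rfl⟩, hx1⟩
    refine ⟨y, ⟨hyP, ?_⟩, rfl⟩
    rw [hfst y] at hx1
    rw [← hx1, Equiv.symm_apply_apply]
  · rintro ⟨y, ⟨hyP, hy1⟩, rfl⟩
    refine ⟨⟨y, hyP, rfl⟩, ?_⟩
    rw [hfst y, hy1, Equiv.apply_symm_apply]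

lemma not_even_restrict_map {π : Equiv.Perm (Idx p)} (hW : π ∈ Wgroup p)
    {𝔓 : Set (Set (Idx p))}
    (hlo : ∀ e : Fin p, ¬ IsEvenPart p (restrictPart p {e} 𝔓)) :
    ∀ e' : Fin p, ¬ IsEvenPart p (restrictPart p {e'} (mapPart p π 𝔓)) := by
  obtain ⟨ε, σ, Φ, hπ⟩ := hW
  have hfst : ∀ y : Idx p, (π y).1 = ε y.1 := fun y => by rw [hπ]
  intro e' hev
  refine hlo (ε.symm e') ?_
  rintro Q ⟨hne, P, hP, rfl⟩
  have hkey := hev (π '' (P ∩ {x : Idx p | x.1 ∈ ({ε.symm e'} : Set (Fin p))}))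
    ⟨hne.image π, π '' P, ⟨P, hP, rfl⟩, (inter_image hfst P e').symm ▸ rfl⟩
  rwa [Set.ncard_image_of_injective _ π.injective] at hkey
  -- note: need the membership proof to typecheck; see below

lemma asPart_map {π : Equiv.Perm (Idx p)} (hW : π ∈ Wgroup p) {𝔓 : Set (Set (Idx p))}
    {ℓ' : ℕ} {τ : Idx p → ℕ} (hτ : τ ∈ AsPart p ℓ' 𝔓) :
    (τ ∘ π.symm) ∈ AsPart p ℓ' (mapPart p π 𝔓) := by
  obtain ⟨ε, σ, Φ, hπ⟩ := hW
  have hsymm : ∀ x : Idx p, π.symm x = (ε.symm x.1, (σ x.1).symm x.2.1, (Φ x.1 x.2.1).symm x.2.2) := by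
    intro x
    apply π.injective
    rw [Equiv.apply_symm_apply, hπ]
    simp only [Equiv.apply_symm_apply]
  obtain ⟨⟨hbd, heq⟩, hind⟩ := hτ
  refine ⟨⟨fun γ => hbd (π.symm γ), ?_⟩, ?_⟩
  · -- equations
    intro e'
    have hside : ∀ s : Fin 2, (τ ∘ π.symm) (e', s, 0) + (τ ∘ π.symm) (e', s, 1)
        = τ (ε.symm e', (σ e').symm s, 0) + τ (ε.symm e', (σ e').symm s, 1) := by
      intro s
      simp only [Function.comp_apply, hsymm]
      rcases perm2 (Φ e' s).symm with ⟨h0, h1⟩ | ⟨h0, h1⟩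
      · rw [h0, h1]
      · rw [h0, h1, Nat.add_comm]
    rw [show ((e' : Fin p), (0 : Fin 2), (0 : Fin 2)) = (e', (0:Fin 2), (0:Fin 2)) from rfl]
    have e0 := hside 0
    have e1 := hside 1
    rw [e0, e1]
    rcases perm2 (σ e').symm with ⟨h0, h1⟩ | ⟨h0, h1⟩
    · rw [h0, h1]; exact heq (ε.symm e')
    · rw [h0, h1]; exact (heq (ε.symm e')).symm
  · -- induces
    intro β γ
    rw [memSameClass_map β γ]
    exact hind (π.symm β) (π.symm γ)

lemma conPart_map {π : Equiv.Perm (Idx p)} (hW : π ∈ Wgroup p) {𝔓 : Set (Set (Idx p))}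
    (h : 𝔓 ∈ ConPart p) : mapPart p π 𝔓 ∈ ConPart p := by
  obtain ⟨hpart, ⟨hge, hlo⟩, ⟨ℓ', τ, hτ⟩⟩ := h
  exact ⟨mapPart_isPartition hpart, ⟨isEvenPart_map hge, not_even_restrict_map hW hlo⟩,
    ⟨ℓ', τ ∘ π.symm, asPart_map hW hτ⟩⟩

end Aux5
/-- The `p`-th central moment of `ssac` equals `∑_{ℭ ∈ Isom(p)} |ℭ| · Sols(ℭ,ℓ)`,
where `Sols(ℭ,ℓ)` is the common value of `|As(𝔓,=,ℓ)|` over `𝔓 ∈ ℭ`. -/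
theorem central_moment_ssac_eq_sum_isom (p ℓ : ℕ)
    (sols : Set (Set (Set (Idx p))) → ℕ)
    (hsols : ∀ C ∈ IsomCls p, ∀ 𝔓 ∈ C, sols C = (AsPart p ℓ 𝔓).ncard) :
    cmom p ℓ ssac = ∑ᶠ C ∈ IsomCls p, (C.ncard : ℝ) * (sols C : ℝ) := by
  classical
  set T := (ConPart p).toFinite.toFinset with hT
  set I := (IsomCls p).toFinite.toFinset with hI
  have horb : ∀ 𝔓 ∈ T, ({𝔔 | Isomorphic p 𝔓 𝔔} : Set (Set (Set (Idx p)))) ∈ I := by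
    intro 𝔓 h𝔓
    rw [hI, Set.Finite.mem_toFinset]
    exact ⟨𝔓, (Set.Finite.mem_toFinset _).mp h𝔓, rfl⟩
  have hkey : ∀ C ∈ I, ∀ 𝔓, (𝔓 ∈ T ∧ ({𝔔 | Isomorphic p 𝔓 𝔔} : Set (Set (Set (Idx p)))) = C)
      ↔ 𝔓 ∈ C := by
    intro C hC 𝔓
    rw [hI, Set.Finite.mem_toFinset] at hC
    obtain ⟨𝔓₁, h𝔓₁, rfl⟩ := hC
    constructor
    · rintro ⟨hT𝔓, horb𝔓⟩
      rw [← horb𝔓]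
      exact isomorphic_refl 𝔓
    · intro h𝔓C
      have h𝔓Con : 𝔓 ∈ ConPart p := by
        obtain ⟨π, hπ, rfl⟩ := h𝔓C
        exact conPart_map hπ h𝔓₁
      refine ⟨(Set.Finite.mem_toFinset _).mpr h𝔓Con, ?_⟩
      ext 𝔔
      simp only [Set.mem_setOf_eq]
      constructor
      · intro h; exact isomorphic_trans h𝔓C h
      · intro h; exact isomorphic_trans (isomorphic_symm h𝔓C) h
  have main : (goodF p ℓ).card = ∑ C ∈ I, C.ncard * sols C := by
    rw [card_goodF, ← hT]
    rw [← Finset.sum_fiberwise_of_maps_to (g := fun 𝔓 => ({𝔔 | Isomorphic p 𝔓 𝔔} :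
      Set (Set (Set (Idx p))))) horb]
    refine Finset.sum_congr rfl fun C hC => ?_
    have hCiso : C ∈ IsomCls p := by rw [hI, Set.Finite.mem_toFinset] at hC; exact hC
    have hfil : ∀ 𝔓, 𝔓 ∈ T.filter (fun 𝔓 => ({𝔔 | Isomorphic p 𝔓 𝔔} :
        Set (Set (Set (Idx p)))) = C) ↔ 𝔓 ∈ C := by
      intro 𝔓
      rw [Finset.mem_filter]
      exact hkey C hC 𝔓
    have hcard : (T.filter (fun 𝔓 => ({𝔔 | Isomorphic p 𝔓 𝔔} :
        Set (Set (Set (Idx p)))) = C)).card = C.ncard := by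
      rw [← Set.ncard_coe_finset]
      congr 1
      ext 𝔓
      rw [Finset.mem_coe]
      exact hfil 𝔓
    rw [Finset.sum_congr rfl (fun 𝔓 h𝔓 => (hsols C hCiso 𝔓 ((hfil 𝔓).mp h𝔓)).symm),
      Finset.sum_const, hcard, smul_eq_mul]
  rw [cmom_eq_card, main]
  rw [← Set.Finite.coe_toFinset (IsomCls p).toFinite, finsum_mem_coe_finset, ← hI]
  push_cast
  rfl
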